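/- arXiv:2503.02317 — 4 statements merged into one kernel-verified Lean document; each statement's English description precedes it below -/
import Mathlib

section
/- For every positive integer n, the limit as i → ∞ of s_i(n)^{2^{-i}} exists, where s_i(n) is the generalized Sylvester sequence. (This limit is denoted c_n.) -/
open Filter Topology Finset

/-- `sylv n i` is the generalized Sylvester sequence term `s_{i+1}(n)`:
`s_1(n) = n + 1` and `s_{i+1}(n) = s_i(n)^2 - s_i(n) + 1`. -/
def sylv (n : ℕ) : ℕ → ℕ
  | 0 => n + 1
  | i + 1 => sylv n i ^ 2 - sylv n i + 1

lemma sylv_two_le (n : ℕ) (hn : 0 < n) (i : ℕ) : 2 ≤ sylv n i := by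
  induction i with
  | zero => simp only [sylv]; omega
  | succ i ih =>
    have h : sylv n i * 2 ≤ sylv n i * sylv n i := Nat.mul_le_mul_left _ ih
    simp only [sylv, pow_two]
    omega

lemma sylv_cast (n : ℕ) (hn : 0 < n) (i : ℕ) :
    (sylv n (i + 1) : ℝ) = (sylv n i : ℝ) ^ 2 - sylv n i + 1 := by
  have h2 := sylv_two_le n hn i
  have hle : sylv n i ≤ sylv n i ^ 2 := by nlinarith
  rw [show sylv n (i + 1) = sylv n i ^ 2 - sylv n i + 1 from rfl]
  push_cast [hle]
  ring

/-- For every positive integer `n`, the limit of `s_i(n) ^ (2⁻¹ ^ i)` as `i → ∞` exists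
(here `sylv n i = s_{i+1}(n)`, so the exponent is `2⁻¹ ^ (i + 1)`). -/
theorem sylvester_limit_exists (n : ℕ) (hn : 0 < n) :
    ∃ c : ℝ, Tendsto (fun i : ℕ => (sylv n i : ℝ) ^ ((2⁻¹ : ℝ) ^ (i + 1)))
      atTop (𝓝 c) := by
  set a : ℕ → ℝ := fun i => (2⁻¹ : ℝ) ^ (i + 1) * Real.log (sylv n i) with ha
  have hpos : ∀ i, (2 : ℝ) ≤ (sylv n i : ℝ) := fun i => by
    exact_mod_cast sylv_two_le n hn i
  have hlog : ∀ i, 0 ≤ Real.log (sylv n i) := fun i =>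
    Real.log_nonneg (by linarith [hpos i])
  have hanti : Antitone a := antitone_nat_of_succ_le (fun i => by
    have h1 : (sylv n (i + 1) : ℝ) ≤ (sylv n i : ℝ) ^ 2 := by
      rw [sylv_cast n hn i]; nlinarith [hpos i]
    have h0 : (0 : ℝ) < (sylv n (i + 1) : ℝ) := by linarith [hpos (i + 1)]
    have h2 : Real.log (sylv n (i + 1)) ≤ 2 * Real.log (sylv n i) := by
      calc Real.log (sylv n (i + 1)) ≤ Real.log ((sylv n i : ℝ) ^ 2) :=
            Real.log_le_log h0 h1
        _ = 2 * Real.log (sylv n i) := by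
            rw [Real.log_pow]; push_cast; ring
    simp only [ha]
    have hk : (0:ℝ) ≤ (2⁻¹ : ℝ) ^ (i + 2) := by positivity
    calc (2⁻¹ : ℝ) ^ (i + 1 + 1) * Real.log (sylv n (i + 1))
        ≤ (2⁻¹ : ℝ) ^ (i + 2) * (2 * Real.log (sylv n i)) := by
          exact mul_le_mul_of_nonneg_left (by simpa using h2) hk
      _ = (2⁻¹ : ℝ) ^ (i + 1) * Real.log (sylv n i) := by ring)
  have hbdd : BddBelow (Set.range a) := by
    refine ⟨0, ?_⟩
    rintro x ⟨i, rfl⟩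
    have : (0:ℝ) ≤ (2⁻¹ : ℝ) ^ (i + 1) := by positivity
    exact mul_nonneg this (hlog i)
  have hconv : Tendsto a atTop (𝓝 (⨅ i, a i)) :=
    tendsto_atTop_ciInf hanti hbdd
  refine ⟨Real.exp (⨅ i, a i), ?_⟩
  have : (fun i : ℕ => (sylv n i : ℝ) ^ ((2⁻¹ : ℝ) ^ (i + 1)))
      = fun i => Real.exp (a i) := by
    funext i
    rw [Real.rpow_def_of_pos (by linarith [hpos i])]
    simp only [ha]
    ring_nf
  rw [this]
  exact (Real.continuous_exp.tendsto _).comp hconv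
end

section
/- Let u be a positive real number and t a positive integer. Let u_1 ≥ u_2 ≥ ⋯ > 0 be a sequence of positive real numbers satisfying ∑_{i=1}^{n} u_i + u · ∏_{i=1}^{n} u_i = u for every n ≥ t. Let v_1 ≥ v_2 ≥ ⋯ > 0 be a sequence of positive real numbers satisfying ∑_{i=1}^{n} v_i + u · ∏_{i=1}^{n} v_i ≤ u for every n ≥ t, and assume v_n ≤ u_n for every n < t. Then ∑_{i=1}^{n} v_i ≤ ∑_{i=1}^{n} u_i for every positive integer n. -/
open Filter Topology Finset

/-- Key comparison lemma: if `u₁ ≥ u₂ ≥ ⋯ > 0` satisfies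
`∑_{i=1}^n uᵢ + u * ∏_{i=1}^n uᵢ = u` for all `n ≥ t`, and `v₁ ≥ v₂ ≥ ⋯ > 0` satisfies
`∑_{i=1}^n vᵢ + u * ∏_{i=1}^n vᵢ ≤ u` for all `n ≥ t`, and `vₙ ≤ uₙ` for `n < t`, then
`∑_{i=1}^n vᵢ ≤ ∑_{i=1}^n uᵢ` for all `n` (sequences are `0`-indexed: `U i = u_{i+1}`). -/
theorem comparison_lemma (u : ℝ) (hu : 0 < u) (t : ℕ) (ht : 0 < t)
    (U V : ℕ → ℝ)
    (hUpos : ∀ i, 0 < U i) (hUanti : Antitone U)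
    (hVpos : ∀ i, 0 < V i) (hVanti : Antitone V)
    (hUeq : ∀ n, t ≤ n →
      ∑ i ∈ Finset.range n, U i + u * ∏ i ∈ Finset.range n, U i = u)
    (hVle : ∀ n, t ≤ n →
      ∑ i ∈ Finset.range n, V i + u * ∏ i ∈ Finset.range n, V i ≤ u)
    (hVU : ∀ i, i + 1 < t → V i ≤ U i) :
    ∀ n, ∑ i ∈ Finset.range n, V i ≤ ∑ i ∈ Finset.range n, U i := by
  intro n
  induction n using Nat.strong_induction_on with
  | _ n IH =>
  rcases lt_or_ge n t with hnt | hnt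
  -- For `n < t` the claim follows termwise from `hVU`.
  · refine Finset.sum_le_sum fun i hi => hVU i ?_
    have := Finset.mem_range.mp hi
    omega
  -- For `n ≥ t`, argue by contradiction. Let `δ = ∑ V - ∑ U > 0` and let `W` be `U` with
  -- the last entry `U (n-1)` increased by `δ`. Then the prefix sums of `W` dominate those
  -- of `V` (by the induction hypothesis) with equal totals, so since `V` is antitone, a
  -- tangent-line bound on `log` together with Abel summation gives `∏ W ≤ ∏ V`. But the
  -- constraints give `u * ∏ V ≤ u - ∑ V < u - ∑ U = u * ∏ U ≤ u * ∏ W`, a contradiction.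
  · by_contra hcon
    push_neg at hcon
    have h1 : 0 < n := lt_of_lt_of_le ht hnt
    set δ : ℝ := (∑ i ∈ Finset.range n, V i) - ∑ i ∈ Finset.range n, U i with hδ
    have hδpos : 0 < δ := sub_pos.mpr hcon
    set W : ℕ → ℝ := fun i => if i = n - 1 then U i + δ else U i with hWdef
    have hWpos : ∀ i, 0 < W i := by
      intro i
      have := hUpos i
      simp only [hWdef]
      split <;> linarith
    have hUW : ∀ i, U i ≤ W i := by
      intro i
      have := hUpos i
      simp only [hWdef]
      split <;> linarith
    have hsumW : ∑ i ∈ Finset.range n, W i = ∑ i ∈ Finset.range n, V i := by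
      have h2 : ∀ i, W i = U i + (if i = n - 1 then δ else 0) := by
        intro i; by_cases h : i = n - 1 <;> simp [hWdef, h]
      rw [Finset.sum_congr rfl fun i _ => h2 i, Finset.sum_add_distrib,
        Finset.sum_ite_eq' (Finset.range n) (n - 1) (fun _ => δ)]
      have : n - 1 ∈ Finset.range n := Finset.mem_range.mpr (by omega)
      rw [if_pos this, hδ]; ring
    -- prefix sums of `W` dominate those of `V`
    have hpre : ∀ m, m ≤ n → ∑ i ∈ Finset.range m, V i ≤ ∑ i ∈ Finset.range m, W i := by
      intro m hm
      rcases eq_or_lt_of_le hm with rfl | hmlt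
      · rw [hsumW]
      · have hWU' : ∑ i ∈ Finset.range m, W i = ∑ i ∈ Finset.range m, U i := by
          refine Finset.sum_congr rfl fun i hi => ?_
          have hi' := Finset.mem_range.mp hi
          have : i ≠ n - 1 := by omega
          simp [hWdef, this]
        rw [hWU']
        exact IH m hmlt
    -- key step: `∏ W ≤ ∏ V` via log-concavity and Abel summation
    have key : ∏ i ∈ Finset.range n, W i ≤ ∏ i ∈ Finset.range n, V i := by
      have habel : ∑ i ∈ Finset.range n, (V i)⁻¹ * (W i - V i) ≤ 0 := by
        have hparts := Finset.sum_range_by_parts (fun i => (V i)⁻¹) (fun i => W i - V i) n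
        simp only [smul_eq_mul] at hparts
        rw [hparts]
        have htot : ∑ i ∈ Finset.range n, (W i - V i) = 0 := by
          rw [Finset.sum_sub_distrib, hsumW]; ring
        rw [htot, mul_zero, zero_sub, neg_nonpos]
        refine Finset.sum_nonneg fun i hi => ?_
        have hi' := Finset.mem_range.mp hi
        have hw : (V i)⁻¹ ≤ (V (i + 1))⁻¹ :=
          inv_anti₀ (hVpos (i + 1)) (hVanti (Nat.le_succ i))
        have hB : 0 ≤ ∑ j ∈ Finset.range (i + 1), (W j - V j) := by
          rw [Finset.sum_sub_distrib, sub_nonneg]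
          exact hpre (i + 1) (by omega)
        exact mul_nonneg (sub_nonneg.mpr hw) hB
      have hlog : ∀ i ∈ Finset.range n,
          Real.log (W i) - Real.log (V i) ≤ (V i)⁻¹ * (W i - V i) := by
        intro i _
        have hpos : 0 < W i / V i := div_pos (hWpos i) (hVpos i)
        have h3 : Real.log (W i / V i) ≤ W i / V i - 1 := Real.log_le_sub_one_of_pos hpos
        rw [Real.log_div (ne_of_gt (hWpos i)) (ne_of_gt (hVpos i))] at h3
        have hV0 : (V i) ≠ 0 := ne_of_gt (hVpos i)
        calc Real.log (W i) - Real.log (V i) ≤ W i / V i - 1 := h3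
          _ = (V i)⁻¹ * (W i - V i) := by field_simp
      have hsumlog : ∑ i ∈ Finset.range n, Real.log (W i) ≤
          ∑ i ∈ Finset.range n, Real.log (V i) := by
        have h4 := Finset.sum_le_sum hlog
        rw [Finset.sum_sub_distrib] at h4
        linarith
      have hprodW : ∏ i ∈ Finset.range n, W i =
          Real.exp (∑ i ∈ Finset.range n, Real.log (W i)) := by
        rw [Real.exp_sum]
        exact (Finset.prod_congr rfl fun i _ => (Real.exp_log (hWpos i)).symm)
      have hprodV : ∏ i ∈ Finset.range n, V i =
          Real.exp (∑ i ∈ Finset.range n, Real.log (V i)) := by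
        rw [Real.exp_sum]
        exact (Finset.prod_congr rfl fun i _ => (Real.exp_log (hVpos i)).symm)
      rw [hprodW, hprodV]
      exact Real.exp_le_exp.mpr hsumlog
    -- derive the contradiction
    have hUn := hUeq n hnt
    have hVn := hVle n hnt
    have hprodlt : ∏ i ∈ Finset.range n, V i < ∏ i ∈ Finset.range n, U i := by
      have : u * ∏ i ∈ Finset.range n, V i < u * ∏ i ∈ Finset.range n, U i := by linarith
      exact lt_of_mul_lt_mul_left this hu.le
    have hUWprod : ∏ i ∈ Finset.range n, U i ≤ ∏ i ∈ Finset.range n, W i :=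
      Finset.prod_le_prod (fun i _ => (hUpos i).le) (fun i _ => hUW i)
    linarith
end

section
/- Let x_1 ≥ x_2 ≥ ⋯ ≥ x_n > 0 and y_1 ≥ y_2 ≥ ⋯ ≥ y_n > 0 be real numbers such that ∏_{i=1}^{j} x_i ≥ ∏_{i=1}^{j} y_i for all j ≤ n. Then ∑_{i=1}^{n} x_i ≥ ∑_{i=1}^{n} y_i. -/
open Filter Topology Finset

lemma chain_anti {n : ℕ} {y : ℕ → ℝ} (hy : ∀ i, i + 1 < n → y (i + 1) ≤ y i)
    {i j : ℕ} (hij : i ≤ j) (hj : j < n) : y j ≤ y i := by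
  induction j with
  | zero => obtain rfl := Nat.le_zero.mp hij; exact le_refl _
  | succ k ih =>
    rcases Nat.eq_or_lt_of_le hij with h | h
    · exact h ▸ le_refl _
    · exact le_trans (hy k hj) (ih (Nat.lt_succ_iff.mp h) (Nat.lt_of_succ_lt hj))

lemma abel_nonneg : ∀ (n : ℕ) (y d : ℕ → ℝ),
    (∀ i, i + 1 < n → y (i + 1) ≤ y i) → (∀ i < n, 0 ≤ y i) →
    (∀ j ≤ n, 0 ≤ ∑ i ∈ Finset.range j, d i) →
    0 ≤ ∑ i ∈ Finset.range n, y i * d i := by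
  intro n
  induction n with
  | zero => simp
  | succ m ih =>
    intro y d hy hpos hS
    have key : ∑ i ∈ Finset.range (m + 1), y i * d i
        = ∑ i ∈ Finset.range m, (y i - y m) * d i
          + y m * ∑ i ∈ Finset.range (m + 1), d i := by
      have e1 : ∑ i ∈ Finset.range (m + 1), y i * d i
          = ∑ i ∈ Finset.range (m + 1), ((y i - y m) * d i + y m * d i) :=
        Finset.sum_congr rfl (fun i _ => by ring)
      rw [e1, Finset.sum_add_distrib,
        Finset.sum_range_succ (fun i => (y i - y m) * d i), ← Finset.mul_sum]
      ring
    rw [key]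
    have h1 : 0 ≤ ∑ i ∈ Finset.range m, (y i - y m) * d i := by
      apply ih
      · intro i hi
        have := hy i (Nat.lt_succ_of_lt hi)
        linarith
      · intro i hi
        have := chain_anti hy (Nat.le_of_lt_succ (Nat.lt_succ_of_lt hi)) (Nat.lt_succ_self m)
        linarith
      · intro j hj; exact hS j (Nat.le_succ_of_le hj)
    have h2 : 0 ≤ y m * ∑ i ∈ Finset.range (m + 1), d i :=
      mul_nonneg (hpos m (Nat.lt_succ_self m)) (hS (m + 1) le_rfl)
    linarith

/-- If `x₁ ≥ ⋯ ≥ xₙ > 0` and `y₁ ≥ ⋯ ≥ yₙ > 0` satisfy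
`∏_{i=1}^j xᵢ ≥ ∏_{i=1}^j yᵢ` for all `j ≤ n`, then `∑_{i=1}^n xᵢ ≥ ∑_{i=1}^n yᵢ`
(sequences are `0`-indexed: `x i = x_{i+1}`). -/
theorem sum_le_sum_of_prod_le_prod (n : ℕ) (x y : ℕ → ℝ)
    (hxpos : ∀ i < n, 0 < x i) (hypos : ∀ i < n, 0 < y i)
    (hxanti : ∀ i, i + 1 < n → x (i + 1) ≤ x i)
    (hyanti : ∀ i, i + 1 < n → y (i + 1) ≤ y i)
    (hprod : ∀ j ≤ n, ∏ i ∈ Finset.range j, y i ≤ ∏ i ∈ Finset.range j, x i) :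
    ∑ i ∈ Finset.range n, y i ≤ ∑ i ∈ Finset.range n, x i := by
  set d : ℕ → ℝ := fun i => Real.log (x i) - Real.log (y i) with hd
  have hS : ∀ j ≤ n, 0 ≤ ∑ i ∈ Finset.range j, d i := by
    intro j hj
    have hxp : ∀ i ∈ Finset.range j, 0 < x i :=
      fun i hi => hxpos i (lt_of_lt_of_le (Finset.mem_range.mp hi) hj)
    have hyp : ∀ i ∈ Finset.range j, 0 < y i :=
      fun i hi => hypos i (lt_of_lt_of_le (Finset.mem_range.mp hi) hj)
    have hsum : ∑ i ∈ Finset.range j, d i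
        = Real.log (∏ i ∈ Finset.range j, x i) - Real.log (∏ i ∈ Finset.range j, y i) := by
      rw [Real.log_prod (fun i hi => (hxp i hi).ne'),
        Real.log_prod (fun i hi => (hyp i hi).ne'), ← Finset.sum_sub_distrib]
    rw [hsum, sub_nonneg]
    exact Real.log_le_log (Finset.prod_pos hyp) (hprod j hj)
  have habel : 0 ≤ ∑ i ∈ Finset.range n, y i * d i :=
    abel_nonneg n y d hyanti (fun i hi => (hypos i hi).le) hS
  have hpt : ∀ i ∈ Finset.range n, y i * d i ≤ x i - y i := by
    intro i hi
    have hi' := Finset.mem_range.mp hi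
    have hxp := hxpos i hi'
    have hyp := hypos i hi'
    have hlog : Real.log (x i / y i) ≤ x i / y i - 1 :=
      Real.log_le_sub_one_of_pos (div_pos hxp hyp)
    rw [Real.log_div hxp.ne' hyp.ne'] at hlog
    have h2 : y i * (x i / y i - 1) = x i - y i := by field_simp
    calc y i * d i ≤ y i * (x i / y i - 1) :=
          mul_le_mul_of_nonneg_left hlog hyp.le
      _ = x i - y i := h2
  have := Finset.sum_le_sum hpt
  rw [Finset.sum_sub_distrib] at this
  linarith
end

section
/- For every positive integer n, one has c_n^4 = c_{n(n+1)(n^2+n+1)}, where c_m = lim_{i→∞} s_i(m)^{2^{-i}}. -/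
open Filter Topology Finset

lemma sylv_shift (n : ℕ) : ∀ i, sylv (n * (n + 1) * (n ^ 2 + n + 1)) i = sylv n (i + 2)
  | 0 => by
    show n * (n + 1) * (n ^ 2 + n + 1) + 1 = sylv n 2
    have h1 : sylv n 1 = n ^ 2 + n + 1 := by
      show (n + 1) ^ 2 - (n + 1) + 1 = _
      have : (n + 1) ^ 2 = n ^ 2 + 2 * n + 1 := by ring
      omega
    rw [show sylv n 2 = sylv n 1 ^ 2 - sylv n 1 + 1 from rfl, h1]
    rw [show (n ^ 2 + n + 1) ^ 2 = n * (n + 1) * (n ^ 2 + n + 1) + (n ^ 2 + n + 1) from by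
      ring, Nat.add_sub_cancel]
  | i + 1 => by
    show _ ^ 2 - _ + 1 = _ ^ 2 - _ + 1
    rw [sylv_shift n i]

/-- For every positive integer `n`, `c_n ^ 4 = c_{n(n+1)(n²+n+1)}`, where
`c_m = lim_{i → ∞} s_i(m) ^ (2⁻¹ ^ i)` (here `sylv m i = s_{i+1}(m)`). -/
theorem c_pow_four (n : ℕ) (hn : 0 < n) (cn c' : ℝ)
    (hcn : Tendsto (fun i : ℕ => (sylv n i : ℝ) ^ ((2⁻¹ : ℝ) ^ (i + 1))) atTop (𝓝 cn))
    (hc' : Tendsto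
      (fun i : ℕ => (sylv (n * (n + 1) * (n ^ 2 + n + 1)) i : ℝ) ^ ((2⁻¹ : ℝ) ^ (i + 1)))
      atTop (𝓝 c')) :
    cn ^ 4 = c' := by
  -- shifted version of hcn
  have hshift : Tendsto (fun i : ℕ => (sylv n (i + 2) : ℝ) ^ ((2⁻¹ : ℝ) ^ (i + 3)))
      atTop (𝓝 cn) := by
    have := hcn.comp (tendsto_add_atTop_nat 2)
    simpa [Function.comp_def, add_assoc] using this
  have hfour : Tendsto (fun i : ℕ => ((sylv n (i + 2) : ℝ) ^ ((2⁻¹ : ℝ) ^ (i + 3))) ^ 4)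
      atTop (𝓝 (cn ^ 4)) := hshift.pow 4
  have heq : ∀ i : ℕ, ((sylv n (i + 2) : ℝ) ^ ((2⁻¹ : ℝ) ^ (i + 3))) ^ 4
      = (sylv (n * (n + 1) * (n ^ 2 + n + 1)) i : ℝ) ^ ((2⁻¹ : ℝ) ^ (i + 1)) := by
    intro i
    rw [sylv_shift]
    have hx : (0 : ℝ) ≤ (sylv n (i + 2) : ℝ) := Nat.cast_nonneg _
    rw [← Real.rpow_natCast ((sylv n (i + 2) : ℝ) ^ ((2⁻¹ : ℝ) ^ (i + 3))) 4,
      ← Real.rpow_mul hx]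
    congr 1
    push_cast
    ring
  rw [funext heq] at hfour
  exact tendsto_nhds_unique hfour hc'
end
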